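/- arXiv:2604.18149 — 2 statements merged into one kernel-verified Lean document; each statement's English description precedes it below -/
import Mathlib

section
/- Let A be an n×n real matrix and Q an n×n real matrix. The Lyapunov equation A P + P Aᵀ = -Q has a unique solution P ∈ ℝ^{n×n} if and only if for all eigenvalues λ, λ' of A (over ℂ), λ + λ' ≠ 0. -/
open Matrix Polynomial

variable {m : ℕ}

lemma eval_charpoly' (M : Matrix (Fin m) (Fin m) ℂ) (μ : ℂ) :
    M.charpoly.eval μ = (μ • (1 : Matrix (Fin m) (Fin m) ℂ) - M).det := by
  rw [Matrix.charpoly, ← Polynomial.coe_evalRingHom, RingHom.map_det]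
  congr 1
  ext i j
  by_cases h : i = j <;>
    simp [h, charmatrix_apply, Matrix.one_apply, Matrix.diagonal_apply]

lemma mem_spec_iff (M : Matrix (Fin m) (Fin m) ℂ) (μ : ℂ) :
    μ ∈ spectrum ℂ M ↔ (μ • (1 : Matrix (Fin m) (Fin m) ℂ) - M).det = 0 := by
  rw [spectrum.mem_iff, Algebra.algebraMap_eq_smul_one,
    Matrix.isUnit_iff_isUnit_det, isUnit_iff_ne_zero, not_not]

lemma mem_spec_iff_root (M : Matrix (Fin m) (Fin m) ℂ) (μ : ℂ) :
    μ ∈ spectrum ℂ M ↔ M.charpoly.IsRoot μ := by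
  rw [mem_spec_iff, Polynomial.IsRoot, eval_charpoly']

lemma spec_transpose (M : Matrix (Fin m) (Fin m) ℂ) :
    spectrum ℂ Mᵀ = spectrum ℂ M := by
  ext μ
  rw [mem_spec_iff, mem_spec_iff, ← Matrix.det_transpose (μ • 1 - M),
    Matrix.transpose_sub, Matrix.transpose_smul, Matrix.transpose_one]

lemma exists_eigvec {M : Matrix (Fin m) (Fin m) ℂ} {μ : ℂ} (h : μ ∈ spectrum ℂ M) :
    ∃ v : Fin m → ℂ, v ≠ 0 ∧ M.mulVec v = μ • v := by
  rw [mem_spec_iff] at h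
  obtain ⟨v, hv, hv0⟩ := (Matrix.exists_mulVec_eq_zero_iff).2 h
  refine ⟨v, hv, ?_⟩
  rw [Matrix.sub_mulVec, Matrix.smul_mulVec, Matrix.one_mulVec, sub_eq_zero] at hv0
  exact hv0.symm

lemma aeval_comm {M B P : Matrix (Fin m) (Fin m) ℂ} (hc : M * P = P * B)
    (f : Polynomial ℂ) : (aeval M f) * P = P * (aeval B f) := by
  have hpow : ∀ k : ℕ, M ^ k * P = P * B ^ k := by
    intro k
    induction k with
    | zero => simp
    | succ k ih =>
        rw [pow_succ, pow_succ, mul_assoc, hc, ← mul_assoc, ih, mul_assoc]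
  induction f using Polynomial.induction_on' with
  | add p q hp hq => simp [map_add, add_mul, mul_add, hp, hq]
  | monomial k a =>
      rw [Polynomial.aeval_monomial, Polynomial.aeval_monomial, mul_assoc, hpow,
        ← mul_assoc, Algebra.commutes, mul_assoc]

lemma complex_ker (M : Matrix (Fin m) (Fin m) ℂ)
    (h : ∀ lam ∈ spectrum ℂ M, ∀ lam' ∈ spectrum ℂ M, lam + lam' ≠ 0)
    (P : Matrix (Fin m) (Fin m) ℂ) (hP : M * P + P * Mᵀ = 0) : P = 0 := by
  rcases Nat.eq_zero_or_pos m with hm | hm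
  · subst hm; ext i j; exact i.elim0
  have hc : M * P = P * (-Mᵀ) := by
    rw [mul_neg, eq_neg_iff_add_eq_zero]; exact hP
  have hzero : P * aeval (-Mᵀ) M.charpoly = 0 := by
    rw [← aeval_comm hc, Matrix.aeval_self_charpoly, zero_mul]
  have hu : IsUnit (aeval (-Mᵀ) M.charpoly) := by
    by_contra hne
    have h0 : (0 : ℂ) ∈ spectrum ℂ (aeval (-Mᵀ) M.charpoly) := spectrum.zero_mem (R := ℂ) hne
    rw [spectrum.map_polynomial_aeval_of_degree_pos (-Mᵀ) M.charpoly
      (by rw [Matrix.charpoly_degree_eq_dim]; simpa using hm)] at h0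
    obtain ⟨μ, hμ, hev⟩ := h0
    have h1 : -μ ∈ spectrum ℂ M := by
      rw [← spec_transpose, mem_spec_iff]
      rw [mem_spec_iff] at hμ
      have heq : -μ • (1 : Matrix (Fin m) (Fin m) ℂ) - Mᵀ = -(μ • 1 - -Mᵀ) := by
        module
      rw [heq, Matrix.det_neg, hμ, mul_zero]
    have h2 : μ ∈ spectrum ℂ M := (mem_spec_iff_root M μ).2 hev
    exact h (-μ) h1 μ h2 (by ring)

  obtain ⟨u, hu⟩ := hu
  have hPeq : P = P * (aeval (-Mᵀ) M.charpoly) * (↑u⁻¹ : Matrix (Fin m) (Fin m) ℂ) := by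
    rw [← hu, mul_assoc, Units.mul_inv, mul_one]
  rw [hPeq, hzero, zero_mul]

lemma complex_ker_nontrivial {M : Matrix (Fin m) (Fin m) ℂ} {lam lam' : ℂ}
    (h1 : lam ∈ spectrum ℂ M) (h2 : lam' ∈ spectrum ℂ M) (hs : lam + lam' = 0) :
    ∃ P : Matrix (Fin m) (Fin m) ℂ, P ≠ 0 ∧ M * P + P * Mᵀ = 0 := by
  obtain ⟨v, hv, hvA⟩ := exists_eigvec h1
  obtain ⟨w, hw, hwA⟩ := exists_eigvec h2
  refine ⟨Matrix.vecMulVec v w, ?_, ?_⟩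
  · obtain ⟨i, hi⟩ := Function.ne_iff.1 hv
    obtain ⟨j, hj⟩ := Function.ne_iff.1 hw
    intro hzero
    have := congrFun (congrFun hzero i) j
    simp [Matrix.vecMulVec_apply] at this
    rcases this with h | h
    · exact hi h
    · exact hj h
  · ext i j
    have hMv := congrFun hvA i
    have hMw := congrFun hwA j
    simp only [Matrix.mulVec, dotProduct, Pi.smul_apply, smul_eq_mul] at hMv hMw
    simp only [Matrix.add_apply, Matrix.mul_apply, Matrix.vecMulVec_apply,
      Matrix.transpose_apply, Matrix.zero_apply]
    have e1 : ∑ k, M i k * (v k * w j) = lam * v i * w j := by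
      simp_rw [← mul_assoc]
      rw [← Finset.sum_mul, hMv]
    have e2 : ∑ k, v i * w k * M j k = v i * (lam' * w j) := by
      rw [← hMw, Finset.mul_sum]
      congr 1; ext k; ring
    rw [e1, e2]
    have : lam * v i * w j + v i * (lam' * w j) = (lam + lam') * (v i * w j) := by ring
    rw [this, hs, zero_mul]

lemma real_of_complex_ker (A : Matrix (Fin m) (Fin m) ℝ)
    (h : ∀ P : Matrix (Fin m) (Fin m) ℝ, A * P + P * Aᵀ = 0 → P = 0)
    (P : Matrix (Fin m) (Fin m) ℂ)
    (hP : (A.map (algebraMap ℝ ℂ)) * P + P * (A.map (algebraMap ℝ ℂ))ᵀ = 0) : P = 0 := by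
  have key : ∀ g : ℂ → ℝ, (∀ z w, g (z + w) = g z + g w) →
      (∀ (r : ℝ) (z : ℂ), g ((r : ℂ) * z) = r * g z) →
      (∀ (r : ℝ) (z : ℂ), g (z * (r : ℂ)) = g z * r) → g 0 = 0 →
      A * P.map g + P.map g * Aᵀ = 0 := by
    intro g gadd gmulL gmulR g0
    have gsum : ∀ (s : Finset (Fin m)) (f : Fin m → ℂ), g (∑ k ∈ s, f k) = ∑ k ∈ s, g (f k) := by
      intro s f
      induction s using Finset.induction_on with
      | empty => simpa using g0
      | insert x s hx ih => rw [Finset.sum_insert hx, Finset.sum_insert hx, gadd, ih]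
    ext i j
    have h0 := congrFun (congrFun hP i) j
    simp only [Matrix.add_apply, Matrix.mul_apply, Matrix.zero_apply, Matrix.map_apply,
      Matrix.transpose_apply] at h0 ⊢
    have hgg := congrArg g h0
    rw [gadd, gsum, gsum, g0] at hgg
    rw [← hgg]
    congr 1
    · refine Finset.sum_congr rfl fun k _ => ?_
      rw [Complex.coe_algebraMap, gmulL]
    · refine Finset.sum_congr rfl fun k _ => ?_
      rw [Complex.coe_algebraMap, gmulR]
  have hre := key Complex.re (fun z w => Complex.add_re z w)
    (fun r z => Complex.re_ofReal_mul r z) (fun r z => by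
      rw [mul_comm, Complex.re_ofReal_mul, mul_comm]) rfl
  have him := key Complex.im (fun z w => Complex.add_im z w)
    (fun r z => Complex.im_ofReal_mul r z) (fun r z => by
      rw [mul_comm, Complex.im_ofReal_mul, mul_comm]) rfl

  have h1 := h _ hre
  have h2 := h _ him
  ext i j
  have e1 := congrFun (congrFun h1 i) j
  have e2 := congrFun (congrFun h2 i) j
  simp only [Matrix.map_apply, Matrix.zero_apply] at e1 e2 ⊢
  exact Complex.ext e1 e2

/-- The Lyapunov equation `A P + P Aᵀ = -Q` has a unique solution `P`
iff no two (complex) eigenvalues of `A` sum to zero. -/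
theorem stmt_0 (n : ℕ) (A Q : Matrix (Fin n) (Fin n) ℝ) :
    (∃! P : Matrix (Fin n) (Fin n) ℝ, A * P + P * Aᵀ = -Q) ↔
      (∀ lam ∈ spectrum ℂ (A.map (algebraMap ℝ ℂ)),
        ∀ lam' ∈ spectrum ℂ (A.map (algebraMap ℝ ℂ)), lam + lam' ≠ 0) := by
  constructor
  · rintro ⟨P₀, hP₀, huniq⟩ lam hlam lam' hlam' hsum
    obtain ⟨Pc, hPc0, hPc⟩ := complex_ker_nontrivial hlam hlam' hsum
    have hker : ∀ P : Matrix (Fin n) (Fin n) ℝ, A * P + P * Aᵀ = 0 → P = 0 := by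
      intro P hP
      have heq : A * (P₀ + P) + (P₀ + P) * Aᵀ = -Q := by
        have : A * (P₀ + P) + (P₀ + P) * Aᵀ = (A * P₀ + P₀ * Aᵀ) + (A * P + P * Aᵀ) := by
          noncomm_ring
        rw [this, hP₀, hP, add_zero]
      have := huniq _ heq
      exact add_eq_left.mp this
    exact hPc0 (real_of_complex_ker A hker Pc hPc)
  · intro h
    have hkerR : ∀ P : Matrix (Fin n) (Fin n) ℝ, A * P + P * Aᵀ = 0 → P = 0 := by
      intro P hP
      have hmap : (A.map (algebraMap ℝ ℂ)) * P.map (algebraMap ℝ ℂ) +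
          P.map (algebraMap ℝ ℂ) * (A.map (algebraMap ℝ ℂ))ᵀ = 0 := by
        have : (A.map (algebraMap ℝ ℂ)) * P.map (algebraMap ℝ ℂ) +
            P.map (algebraMap ℝ ℂ) * (A.map (algebraMap ℝ ℂ))ᵀ
            = (A * P + P * Aᵀ).map (algebraMap ℝ ℂ) := by
          rw [Matrix.map_add _ (map_add (algebraMap ℝ ℂ)), Matrix.map_mul, Matrix.map_mul, Matrix.transpose_map]
        rw [this, hP]
        ext i j
        simp
      have hz := complex_ker _ h _ hmap
      ext i j
      have := congrFun (congrFun hz i) j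
      simpa [Matrix.map_apply, Complex.coe_algebraMap, Complex.ofReal_eq_zero] using this
    let L : Matrix (Fin n) (Fin n) ℝ →ₗ[ℝ] Matrix (Fin n) (Fin n) ℝ :=
      { toFun := fun P => A * P + P * Aᵀ
        map_add' := fun x y => by noncomm_ring
        map_smul' := fun c x => by
          simp only [RingHom.id_apply, Matrix.mul_smul, Matrix.smul_mul, smul_add] }
    have hinj : Function.Injective L := by
      intro x y hxy
      have hxy' : A * x + x * Aᵀ = A * y + y * Aᵀ := hxy
      have hd : A * (x - y) + (x - y) * Aᵀ = 0 := by
        have : A * (x - y) + (x - y) * Aᵀ = (A * x + x * Aᵀ) - (A * y + y * Aᵀ) := by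
          noncomm_ring
        rw [this, hxy', sub_self]
      exact sub_eq_zero.mp (hkerR _ hd)
    obtain ⟨P, hPe⟩ := (LinearMap.injective_iff_surjective).mp hinj (-Q)
    exact ⟨P, hPe, fun y hy => hinj (hy.trans hPe.symm)⟩
end

section
/- A real n×n matrix A satisfies λ + λ' ≠ 0 for all eigenvalues λ, λ' of A if and only if the linear map P ↦ A P + P Aᵀ on ℝ^{n×n} is bijective. -/
open Matrix Polynomial

namespace Stmt11Aux

variable {n : ℕ}

lemma charpoly_eval (M : Matrix (Fin n) (Fin n) ℂ) (r : ℂ) :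
    M.charpoly.eval r = (scalar (Fin n) r - M).det := by
  rw [Matrix.charpoly, eval_det, matPolyEquiv_charmatrix]
  simp

lemma mem_spectrum_iff_det (M : Matrix (Fin n) (Fin n) ℂ) (r : ℂ) :
    r ∈ spectrum ℂ M ↔ (scalar (Fin n) r - M).det = 0 := by
  rw [spectrum.mem_iff, Matrix.isUnit_iff_isUnit_det, isUnit_iff_ne_zero, not_not]
  rfl

lemma pow_intertwine (M N P : Matrix (Fin n) (Fin n) ℂ) (h : M * P = P * N) (k : ℕ) :
    M ^ k * P = P * N ^ k := by
  induction k with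
  | zero => simp
  | succ k ih =>
    rw [pow_succ, pow_succ, mul_assoc, h, ← mul_assoc, ih, mul_assoc]

lemma aeval_intertwine (M N P : Matrix (Fin n) (Fin n) ℂ) (h : M * P = P * N) (q : ℂ[X]) :
    aeval M q * P = P * aeval N q := by
  rw [aeval_eq_sum_range M, aeval_eq_sum_range N, Finset.sum_mul, Finset.mul_sum]
  refine Finset.sum_congr rfl fun k _ => ?_
  rw [smul_mul_assoc, mul_smul_comm, pow_intertwine M N P h k]

lemma det_aeval_prod (N : Matrix (Fin n) (Fin n) ℂ) (s : Multiset ℂ) :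
    (aeval N ((s.map (fun r => X - C r)).prod)).det
      = (s.map (fun r => (N - scalar (Fin n) r).det)).prod := by
  induction s using Multiset.induction_on with
  | empty => simp
  | cons a s ih =>
    rw [Multiset.map_cons, Multiset.prod_cons, _root_.map_mul, Matrix.det_mul, ih, Multiset.map_cons,
      Multiset.prod_cons]
    congr 2
    rw [map_sub, aeval_X, aeval_C]; rfl

/-- The Lyapunov map as a linear map. -/
def L (A : Matrix (Fin n) (Fin n) ℝ) :
    Matrix (Fin n) (Fin n) ℝ →ₗ[ℝ] Matrix (Fin n) (Fin n) ℝ where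
  toFun P := A * P + P * Aᵀ
  map_add' P Q := by noncomm_ring
  map_smul' c P := by simp [mul_smul_comm, smul_mul_assoc, smul_add]

lemma map_lin (A : Matrix (Fin n) (Fin n) ℝ) (φ : ℂ →ₗ[ℝ] ℝ) (P : Matrix (Fin n) (Fin n) ℂ) :
    (A.map (algebraMap ℝ ℂ) * P + P * (A.map (algebraMap ℝ ℂ))ᵀ).map φ
      = A * P.map φ + (P.map φ) * Aᵀ := by
  have key : ∀ (a : ℝ) (z : ℂ), φ (algebraMap ℝ ℂ a * z) = a * φ z := by
    intro a z
    rw [← Algebra.smul_def, _root_.map_smul, smul_eq_mul]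
  ext i j
  simp only [Matrix.map_apply, Matrix.add_apply, Matrix.mul_apply, Matrix.transpose_apply,
    map_add, map_sum]
  congr 1
  · exact Finset.sum_congr rfl fun k _ => key _ _
  · refine Finset.sum_congr rfl fun k _ => ?_
    rw [mul_comm, key, mul_comm]

end Stmt11Aux

open Stmt11Aux

/-- No two (complex) eigenvalues of `A` sum to zero iff the linear map
`P ↦ A P + P Aᵀ` on `ℝ^{n×n}` is bijective. -/
theorem stmt_11 (n : ℕ) (A : Matrix (Fin n) (Fin n) ℝ) :
    (∀ lam ∈ spectrum ℂ (A.map (algebraMap ℝ ℂ)),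
        ∀ lam' ∈ spectrum ℂ (A.map (algebraMap ℝ ℂ)), lam + lam' ≠ 0) ↔
      Function.Bijective (fun P : Matrix (Fin n) (Fin n) ℝ => A * P + P * Aᵀ) := by
  set B := A.map (algebraMap ℝ ℂ) with hB
  have hbij : Function.Bijective (fun P : Matrix (Fin n) (Fin n) ℝ => A * P + P * Aᵀ)
      ↔ Function.Injective (L A) := by
    constructor
    · exact fun h => h.1
    · intro h
      exact ⟨h, (LinearMap.injective_iff_surjective).mp h⟩
  rw [hbij]
  constructor
  · -- eigenvalue condition implies injectivity
    intro h
    rw [injective_iff_map_eq_zero]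
    intro P hP
    by_contra hP0
    set Q : Matrix (Fin n) (Fin n) ℂ := P.map (algebraMap ℝ ℂ) with hQ
    have hQ0 : Q ≠ 0 := by
      intro h0
      apply hP0
      ext i j
      have := congrFun (congrFun h0 i) j
      simpa [hQ, Matrix.map_apply] using this
    have hker : B * Q + Q * Bᵀ = 0 := by
      have hP' : A * P + P * Aᵀ = 0 := hP
      have h1 := congrArg (algebraMap ℝ ℂ).mapMatrix hP'
      simp only [map_add, _root_.map_mul, map_zero] at h1
      simp only [RingHom.mapMatrix_apply] at h1
      rw [Matrix.transpose_map] at h1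
      exact h1
    have hint : B * Q = Q * (-Bᵀ) := by
      rw [mul_neg]
      exact eq_neg_of_add_eq_zero_left hker
    have hCH : Q * aeval (-Bᵀ) B.charpoly = 0 := by
      rw [← aeval_intertwine B (-Bᵀ) Q hint, Matrix.aeval_self_charpoly, zero_mul]
    have hdet : (aeval (-Bᵀ) B.charpoly).det = 0 := by
      by_contra hd
      obtain ⟨u, hu⟩ := (Matrix.isUnit_iff_isUnit_det _).mpr (isUnit_iff_ne_zero.mpr hd)
      apply hQ0
      calc Q = Q * ((u : Matrix (Fin n) (Fin n) ℂ) * ↑u⁻¹) := by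
              rw [Units.mul_inv, mul_one]
        _ = Q * ↑u * ↑u⁻¹ := by rw [mul_assoc]
        _ = 0 := by rw [hu, hCH, zero_mul]
    have hsplit := (IsAlgClosed.splits B.charpoly).eq_prod_roots_of_monic
      (Matrix.charpoly_monic B)
    rw [hsplit] at hdet
    rw [det_aeval_prod, Multiset.prod_eq_zero_iff] at hdet
    obtain ⟨r, hr, hr0⟩ := Multiset.mem_map.mp hdet
    have hrB : r ∈ spectrum ℂ B := by
      rw [mem_spectrum_iff_det, ← charpoly_eval]
      exact (mem_roots (Matrix.charpoly_monic B).ne_zero).mp hr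
    have hrB' : -r ∈ spectrum ℂ B := by
      have h1 : scalar (Fin n) (-r) - Bᵀ = -Bᵀ - scalar (Fin n) r := by
        rw [map_neg]; abel
      rw [mem_spectrum_iff_det]
      have h3 : scalar (Fin n) (-r) - B = (scalar (Fin n) (-r) - Bᵀ)ᵀ := by
        rw [Matrix.transpose_sub, Matrix.transpose_transpose, Matrix.scalar_apply,
          Matrix.diagonal_transpose]
      rw [h3, Matrix.det_transpose, h1]
      exact hr0
    exact h r hrB (-r) hrB' (by ring)
  · -- injectivity implies eigenvalue condition
    intro hinj lam hlam lam' hlam' hsum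
    rw [mem_spectrum_iff_det] at hlam hlam'
    have eigvec : ∀ (μ : ℂ), (scalar (Fin n) μ - B).det = 0 →
        ∃ v, v ≠ 0 ∧ B *ᵥ v = μ • v := by
      intro μ hμ
      have hdet0 : (B - scalar (Fin n) μ).det = 0 := by
        have he : B - scalar (Fin n) μ = -(scalar (Fin n) μ - B) := (neg_sub _ _).symm
        rw [he, Matrix.det_neg, hμ, mul_zero]
      obtain ⟨v, hv0, hv⟩ := (Matrix.exists_mulVec_eq_zero_iff).mpr hdet0
      refine ⟨v, hv0, ?_⟩
      rw [Matrix.sub_mulVec] at hv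
      have h2 : scalar (Fin n) μ *ᵥ v = μ • v := by
        ext i
        simp [Matrix.mulVec, Matrix.scalar_apply, diagonal_dotProduct]
      have := sub_eq_zero.mp hv
      rw [h2] at this
      exact this
    obtain ⟨v, hv0, hv⟩ := eigvec lam hlam
    obtain ⟨w, hw0, hw⟩ := eigvec lam' hlam'
    set Pc : Matrix (Fin n) (Fin n) ℂ := Matrix.of fun i j => v i * w j with hPc
    have hkerC : B * Pc + Pc * Bᵀ = 0 := by
      ext i j
      have hvi : (B *ᵥ v) i = lam * v i := by rw [hv]; simp
      have hwj : (B *ᵥ w) j = lam' * w j := by rw [hw]; simp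
      have h1 : (B * Pc) i j = lam * (v i * w j) := by
        simp only [Matrix.mul_apply, hPc, Matrix.of_apply]
        calc ∑ k, B i k * (v k * w j) = (∑ k, B i k * v k) * w j := by
              rw [Finset.sum_mul]; exact Finset.sum_congr rfl fun k _ => by ring
          _ = (B *ᵥ v) i * w j := rfl
          _ = lam * (v i * w j) := by rw [hvi]; ring
      have h2 : (Pc * Bᵀ) i j = lam' * (v i * w j) := by
        simp only [Matrix.mul_apply, hPc, Matrix.of_apply, Matrix.transpose_apply]
        calc ∑ k, v i * w k * B j k = v i * ∑ k, B j k * w k := by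
              rw [Finset.mul_sum]; exact Finset.sum_congr rfl fun k _ => by ring
          _ = v i * (B *ᵥ w) j := rfl
          _ = lam' * (v i * w j) := by rw [hwj]; ring
      simp only [Matrix.add_apply, h1, h2, Matrix.zero_apply]
      rw [← add_mul, hsum, zero_mul]
    obtain ⟨i0, hi0⟩ := Function.ne_iff.mp hv0
    obtain ⟨j0, hj0⟩ := Function.ne_iff.mp hw0
    have hz : Pc i0 j0 ≠ 0 := mul_ne_zero hi0 hj0
    have hre : (Pc i0 j0).re ≠ 0 ∨ (Pc i0 j0).im ≠ 0 := by
      by_contra hc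
      push_neg at hc
      exact hz (Complex.ext hc.1 hc.2)
    have main : ∀ (φ : ℂ →ₗ[ℝ] ℝ), φ (Pc i0 j0) = 0 := by
      intro φ
      have hml := map_lin A φ Pc
      rw [hkerC] at hml
      have hmap0 : (0 : Matrix (Fin n) (Fin n) ℂ).map φ = 0 := by
        ext i j; simp
      rw [hmap0] at hml
      have h0 : L A (Pc.map φ) = 0 := hml.symm
      have hz0 := hinj (by rw [h0, map_zero] : L A (Pc.map φ) = L A 0)
      have := congrFun (congrFun hz0 i0) j0
      simpa [Matrix.map_apply] using this
    obtain hφ | hφ := hre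
    · exact hφ (main Complex.reLm)
    · exact hφ (main Complex.imLm)
end
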